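/- In ℝ with the usual topology, let g : ℝ × ℝ → ℝ be defined by g(x,y) = x² − y², let A = {0,1,2,3,5}, B = {−1,−2,−3,4}, and let f : A → B be defined by f(0) = f(3) = f(5) = 4, f(1) = −1, f(2) = −2. Then D_g(A,B) = 0 and f is topologically proximal Berinde non-expansive with respect to g with N = 1; however, with d the usual metric on ℝ and D(A,B) = inf{d(x,y) : x ∈ A, y ∈ B} = 1, f is not proximal Berinde non-expansive with respect to d with N = 1, i.e., there exist x₁, x₂, u₁, u₂ ∈ A with d(u₁, f(x₁)) = D(A,B) and d(u₂, f(x₂)) = D(A,B) but d(u₁, u₂) > d(x₁, x₂) + d(x₂, u₁). -/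

import Mathlib

open Filter Topology

/-- `D_g(A,B) = inf {|g x y| : x ∈ A, y ∈ B}`. -/
noncomputable def Dg {X : Type*} (g : X → X → ℝ) (A B : Set X) : ℝ :=
  sInf {r : ℝ | ∃ x ∈ A, ∃ y ∈ B, r = |g x y|}

/-- `D(A,B) = inf {d(x,y) : x ∈ A, y ∈ B}` for the usual metric on `ℝ`. -/
noncomputable def Dd (A B : Set ℝ) : ℝ :=
  sInf {r : ℝ | ∃ x ∈ A, ∃ y ∈ B, r = dist x y}

/-- `g(x,y) = x² - y²`. -/
noncomputable def g17 : ℝ → ℝ → ℝ := fun x y => x ^ 2 - y ^ 2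

/-- `A = {0,1,2,3,5}`. -/
def A17 : Set ℝ := {0, 1, 2, 3, 5}

/-- `B = {-1,-2,-3,4}`. -/
def B17 : Set ℝ := {-1, -2, -3, 4}

lemma Dg_eq_of_isLeast {X : Type*} {g : X → X → ℝ} {A B : Set X} {c : ℝ}
    (hmem : ∃ x ∈ A, ∃ y ∈ B, |g x y| = c) (hle : ∀ x ∈ A, ∀ y ∈ B, c ≤ |g x y|) :
    Dg g A B = c := by
  obtain ⟨x, hx, y, hy, rfl⟩ := hmem
  refine IsLeast.csInf_eq ⟨⟨x, hx, y, hy, rfl⟩, ?_⟩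
  rintro r ⟨x', hx', y', hy', rfl⟩
  exact hle x' hx' y' hy'

lemma Dg_eq_zero_of_exists_eq_zero {X : Type*} {g : X → X → ℝ} {A B : Set X}
    (h : ∃ x ∈ A, ∃ y ∈ B, g x y = 0) : Dg g A B = 0 := by
  obtain ⟨x, hx, y, hy, hxy⟩ := h
  exact Dg_eq_of_isLeast ⟨x, hx, y, hy, by rw [hxy, abs_zero]⟩ fun _ _ _ _ => abs_nonneg _

lemma Dd_eq_of_isLeast {A B : Set ℝ} {c : ℝ}
    (hmem : ∃ x ∈ A, ∃ y ∈ B, dist x y = c) (hle : ∀ x ∈ A, ∀ y ∈ B, c ≤ dist x y) :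
    Dd A B = c := by
  obtain ⟨x, hx, y, hy, rfl⟩ := hmem
  refine IsLeast.csInf_eq ⟨⟨x, hx, y, hy, rfl⟩, ?_⟩
  rintro r ⟨x', hx', y', hy', rfl⟩
  exact hle x' hx' y' hy'

/-- When `u` is a best proximity partner of `x` only for `u = x`, the proximal Berinde
inequality collapses to `|g x₁ x₂| ≤ |g x₁ x₂| + N |g x₂ x₁|`. -/
lemma proximal_berinde_of_proximal_eq {X : Type*} {g : X → X → ℝ} {f : X → X} {A : Set X}
    {D N : ℝ} (hN : 0 ≤ N) (hprox : ∀ x ∈ A, ∀ u ∈ A, |g u (f x)| = D → u = x) :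
    ∀ x₁ ∈ A, ∀ x₂ ∈ A, ∀ u₁ ∈ A, ∀ u₂ ∈ A,
      |g u₁ (f x₁)| = D → |g u₂ (f x₂)| = D → |g u₁ u₂| ≤ |g x₁ x₂| + N * |g x₂ u₁| := by
  intro x₁ hx₁ x₂ hx₂ u₁ hu₁ u₂ hu₂ h₁ h₂
  obtain rfl := hprox x₁ hx₁ u₁ hu₁ h₁
  obtain rfl := hprox x₂ hx₂ u₂ hu₂ h₂
  have : 0 ≤ N * |g u₂ u₁| := mul_nonneg hN (abs_nonneg _)
  linarith

lemma Dg_g17_A17_B17 : Dg g17 A17 B17 = 0 :=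
  Dg_eq_zero_of_exists_eq_zero ⟨1, by simp [A17], -1, by simp [B17], by norm_num [g17]⟩

/-- Since `4² = 16` is not a square of an element of `A17`, only `f 1 = -1` and `f 2 = -2`
have `g17`-proximal partners, namely `1` and `2`. -/
lemma eq_of_g17_apply_eq_zero {f : ℝ → ℝ}
    (hf0 : f 0 = 4) (hf3 : f 3 = 4) (hf5 : f 5 = 4) (hf1 : f 1 = -1) (hf2 : f 2 = -2)
    {x u : ℝ} (hx : x ∈ A17) (hu : u ∈ A17) (h : g17 u (f x) = 0) : u = x := by
  simp only [A17, Set.mem_insert_iff, Set.mem_singleton_iff] at hx hu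
  rcases hx with rfl | rfl | rfl | rfl | rfl <;>
    simp only [hf0, hf1, hf2, hf3, hf5] at h <;>
    rcases hu with rfl | rfl | rfl | rfl | rfl <;>
    first | rfl | norm_num [g17] at h

lemma one_le_dist_of_mem_A17_of_mem_B17 {x y : ℝ} (hx : x ∈ A17) (hy : y ∈ B17) :
    1 ≤ dist x y := by
  simp only [A17, B17, Set.mem_insert_iff, Set.mem_singleton_iff] at hx hy
  rcases hx with rfl | rfl | rfl | rfl | rfl <;>
    rcases hy with rfl | rfl | rfl | rfl <;>
    norm_num [Real.dist_eq, abs_of_nonneg, abs_of_nonpos]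

lemma Dd_A17_B17 : Dd A17 B17 = 1 :=
  Dd_eq_of_isLeast ⟨0, by simp [A17], -1, by simp [B17], by norm_num [Real.dist_eq]⟩
    fun _ hx _ hy => one_le_dist_of_mem_A17_of_mem_B17 hx hy

theorem stmt_17 (f : ℝ → ℝ)
    (hf0 : f 0 = 4) (hf3 : f 3 = 4) (hf5 : f 5 = 4)
    (hf1 : f 1 = -1) (hf2 : f 2 = -2) :
    Dg g17 A17 B17 = 0 ∧
    (∀ x₁ ∈ A17, ∀ x₂ ∈ A17, ∀ u₁ ∈ A17, ∀ u₂ ∈ A17,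
      |g17 u₁ (f x₁)| = Dg g17 A17 B17 → |g17 u₂ (f x₂)| = Dg g17 A17 B17 →
      |g17 u₁ u₂| ≤ |g17 x₁ x₂| + 1 * |g17 x₂ u₁|) ∧
    Dd A17 B17 = 1 ∧
    (∃ x₁ ∈ A17, ∃ x₂ ∈ A17, ∃ u₁ ∈ A17, ∃ u₂ ∈ A17,
      dist u₁ (f x₁) = Dd A17 B17 ∧ dist u₂ (f x₂) = Dd A17 B17 ∧
      dist u₁ u₂ > dist x₁ x₂ + 1 * dist x₂ u₁) := by
  refine ⟨Dg_g17_A17_B17, ?_, Dd_A17_B17, ?_⟩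
  · refine proximal_berinde_of_proximal_eq zero_le_one fun x hx u hu h => ?_
    rw [Dg_g17_A17_B17, abs_eq_zero] at h
    exact eq_of_g17_apply_eq_zero hf0 hf3 hf5 hf1 hf2 hx hu h
  · -- `(x₁, x₂, u₁, u₂) = (1, 0, 0, 5)`: `d(0, 5) = 5 > d(1, 0) + d(0, 0) = 1`.
    refine ⟨1, by simp [A17], 0, by simp [A17], 0, by simp [A17], 5, by simp [A17], ?_⟩
    rw [Dd_A17_B17, hf0, hf1]
    norm_num [Real.dist_eq]
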